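/- Let H be an oriented hyperplane through the origin in ℝⁿ and let T be a map on measurable functions that is pointwise with respect to H, with associated functions F⁺, F⁻. Then T is equimeasurable if and only if {F⁺(r,s), F⁻(s,r)} = {r,s} for all r, s ∈ ℝ. -/

import Mathlib

open MeasureTheory Set RealInnerProductSpace

open scoped ENNReal

/-!
The reflection `ρ` in `H` preserves Lebesgue measure and exchanges the two open half-spaces, and
`H` is null, so `|{g > t}|` is the integral over the open positive half-space of the number of
entries of the pair `(g x, g (ρ x))` exceeding `t`. For `g = T f` this pair is
`(F⁺(f x, f (ρ x)), F⁻(f (ρ x), f x))`, which gives sufficiency.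

For necessity, constant functions force `F⁺(b, b) = b`. Then the function equal to `r` on a ball
`A ⊆ H⁺`, to `s` on `ρ A` and to a constant `c` below all values elsewhere is mapped by `T` to a
function of the same shape with values `F⁺(r, s)`, `F⁻(s, r)`. For `t ≥ c` the level-set
measures count how many of the two values exceed `t`, which determines the maximum and the
minimum of the pair.
-/

theorem pair_eq_pair_of_forall_lt_iff {a b r s : ℝ}
    (h : ∀ t, ((t < a ∨ t < b) ↔ (t < r ∨ t < s)) ∧ ((t < a ∧ t < b) ↔ (t < r ∧ t < s))) :
    ({a, b} : Set ℝ) = {r, s} := by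
  have hmax : max a b = max r s :=
    eq_of_forall_lt_iff fun t ↦ by simpa only [lt_max_iff] using (h t).1
  have hmin : min a b = min r s :=
    eq_of_forall_lt_iff fun t ↦ by simpa only [lt_min_iff] using (h t).2
  rcases le_total a b with hab | hab <;> rcases le_total r s with hrs | hrs <;>
    simp_all [pair_comm]

theorem or_and_iff_of_ite_add_eq {m : ℝ≥0∞} (h0 : m ≠ 0) (htop : m ≠ ∞) {p q p' q' : Prop}
    [Decidable p] [Decidable q] [Decidable p'] [Decidable q']
    (h : (if p then m else 0) + (if q then m else 0) =
      (if p' then m else 0) + (if q' then m else 0)) :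
    ((p ∨ q) ↔ (p' ∨ q')) ∧ ((p ∧ q) ↔ (p' ∧ q')) := by
  have hdouble : m + m ≠ m :=
    fun h ↦ h0 ((ENNReal.add_right_inj htop).1 (h.trans (add_zero m).symm))
  split_ifs at h <;> simp_all [eq_comm]

section Pointwise

variable {α : Type*} {σ : α → α} {φ : α → ℝ}

open scoped Classical in
noncomputable def twoStep (A B : Set α) (a b c : ℝ) (x : α) : ℝ :=
  if x ∈ A then a else if x ∈ B then b else c

-- `σ` stands for the reflection `x ↦ x†` and `{x | 0 ≤ φ x}` for `H⁺`.
def IsPointwise (σ : α → α) (φ : α → ℝ) (Fp Fm : ℝ → ℝ → ℝ) (T : (α → ℝ) → α → ℝ) : Prop :=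
  ∀ f x, T f x = if 0 ≤ φ x then Fp (f x) (f (σ x)) else Fm (f x) (f (σ x))

namespace IsPointwise

variable {Fp Fm : ℝ → ℝ → ℝ} {T : (α → ℝ) → α → ℝ}

theorem apply_const (hT : IsPointwise σ φ Fp Fm T) (hdiag : ∀ s, Fp s s = Fm s s) (b : ℝ) :
    T (fun _ ↦ b) = fun _ ↦ Fp b b := by
  ext x
  rw [hT]
  split_ifs
  · rfl
  · exact (hdiag b).symm

theorem pair_apply_of_pos (hT : IsPointwise σ φ Fp Fm T) (hσσ : Function.Involutive σ)
    (hφσ : ∀ x, φ (σ x) = -φ x) (f : α → ℝ) {x : α} (hx : 0 < φ x) :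
    ({T f x, T f (σ x)} : Set ℝ) = {Fp (f x) (f (σ x)), Fm (f (σ x)) (f x)} := by
  rw [hT, hT, if_pos hx.le, if_neg (by rw [hφσ]; linarith), hσσ x]

theorem apply_twoStep (hT : IsPointwise σ φ Fp Fm T) (hdiag : ∀ s, Fp s s = Fm s s)
    (hσσ : Function.Involutive σ) (hφσ : ∀ x, φ (σ x) = -φ x) {A : Set α}
    (hA : ∀ x ∈ A, 0 < φ x) (r s : ℝ) {c : ℝ} (hc : Fp c c = c) :
    T (twoStep A (σ ⁻¹' A) r s c) = twoStep A (σ ⁻¹' A) (Fp r s) (Fm s r) c := by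
  ext x
  have hσA : ∀ y ∈ A, σ y ∉ A := fun y hy hσy ↦ by linarith [hA y hy, hA _ hσy, hφσ y]
  rw [hT]
  by_cases hxA : x ∈ A
  · simp [twoStep, hxA, (hA x hxA).le, hσA x hxA, hσσ x]
  by_cases hσxA : σ x ∈ A
  · have hx : ¬ 0 ≤ φ x := by linarith [hA _ hσxA, hφσ x]
    simp [twoStep, hxA, hσxA, hx]
  · have hσσx : σ (σ x) ∉ A := by rwa [hσσ x]
    split_ifs <;> simp [twoStep, hxA, hσxA, hσσx, hc, ← hdiag]

end IsPointwise

variable [MeasurableSpace α] {μ : Measure α}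

def Equimeasurable (μ : Measure α) (T : (α → ℝ) → α → ℝ) : Prop :=
  ∀ f, Measurable f → ∀ t : ℝ, μ {x | t < T f x} = μ {x | t < f x}

theorem eq_of_forall_measure_lt_const_eq (hμ : μ ≠ 0) {a b : ℝ}
    (h : ∀ t : ℝ, μ {_x : α | t < a} = μ {_x : α | t < b}) : a = b :=
  eq_of_forall_lt_iff fun t ↦ by
    have hne : μ univ ≠ 0 := by simpa using hμ
    have := h t
    by_cases ha : t < a <;> by_cases hb : t < b <;> simp_all [hne.symm, not_lt.2]

theorem measurable_twoStep {A B : Set α} (hA : MeasurableSet A) (hB : MeasurableSet B)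
    {a b c : ℝ} : Measurable (twoStep A B a b c) :=
  Measurable.ite hA measurable_const (Measurable.ite hB measurable_const measurable_const)

theorem measure_lt_twoStep {A B : Set α} (hB : MeasurableSet B) (hAB : Disjoint A B)
    (a b : ℝ) {c t : ℝ} (hct : c ≤ t) :
    μ {x | t < twoStep A B a b c x} = (if t < a then μ A else 0) + (if t < b then μ B else 0) := by
  have hset : {x | t < twoStep A B a b c x} =
      (if t < a then A else ∅) ∪ (if t < b then B else ∅) := by
    ext x
    by_cases hxA : x ∈ A
    · have hxB : x ∉ B := hAB.notMem_of_mem_left hxA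
      split_ifs <;> simp_all [twoStep]
    · by_cases hxB : x ∈ B <;> split_ifs <;> simp_all [twoStep]
  rw [hset, measure_union]
  · split_ifs <;> simp
  · split_ifs <;> simp [hAB]
  · split_ifs <;> simp [hB]

theorem pair_eq_of_forall_measure_lt_twoStep_eq {A B : Set α} (hB : MeasurableSet B)
    (hAB : Disjoint A B) (hBA : μ B = μ A) (h0 : μ A ≠ 0) (htop : μ A ≠ ∞) {a b r s c : ℝ}
    (ha : c ≤ a) (hb : c ≤ b) (hr : c ≤ r) (hs : c ≤ s)
    (h : ∀ t, μ {x | t < twoStep A B a b c x} = μ {x | t < twoStep A B r s c x}) :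
    ({a, b} : Set ℝ) = {r, s} := by
  refine pair_eq_pair_of_forall_lt_iff fun t ↦ ?_
  rcases lt_or_ge t c with htc | hct
  · simp [htc.trans_le ha, htc.trans_le hb, htc.trans_le hr, htc.trans_le hs]
  · have ht := h t
    rw [measure_lt_twoStep hB hAB _ _ hct, measure_lt_twoStep hB hAB _ _ hct, hBA] at ht
    exact or_and_iff_of_ite_add_eq h0 htop ht

theorem lintegral_eq_setLIntegral_pos_add_comp (hσ : MeasurePreserving σ μ μ)
    (hφ : Measurable φ) (hφσ : ∀ x, φ (σ x) = -φ x) (hφ0 : μ {x | φ x = 0} = 0)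
    {h : α → ℝ≥0∞} (hh : Measurable h) :
    ∫⁻ x, h x ∂μ = ∫⁻ x in {x | 0 < φ x}, (h x + h (σ x)) ∂μ := by
  have hpos : MeasurableSet {x | 0 < φ x} := measurableSet_lt measurable_const hφ
  have hneg : ({x | 0 < φ x}ᶜ : Set α) =ᵐ[μ] ({x | φ x < 0} : Set α) := by
    refine Filter.eventuallyEq_set.2 ?_
    filter_upwards [measure_eq_zero_iff_ae_notMem.1 hφ0] with x hx
    simp only [mem_compl_iff, mem_ofPred_eq, not_lt]
    exact ⟨fun h ↦ lt_of_le_of_ne h hx, le_of_lt⟩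
  have hpre : σ ⁻¹' {x | φ x < 0} = {x | 0 < φ x} := by
    ext x; simp [hφσ]
  rw [← lintegral_add_compl h hpos, setLIntegral_congr hneg, lintegral_add_left hh,
    ← hσ.setLIntegral_comp_preimage (measurableSet_lt hφ measurable_const) hh, hpre]

theorem measure_lt_eq_of_forall_pair_eq (hσ : MeasurePreserving σ μ μ) (hφ : Measurable φ)
    (hφσ : ∀ x, φ (σ x) = -φ x) (hφ0 : μ {x | φ x = 0} = 0) {f g : α → ℝ}
    (hf : Measurable f) (hg : Measurable g)
    (hfg : ∀ x, 0 < φ x → ({g x, g (σ x)} : Set ℝ) = {f x, f (σ x)}) (t : ℝ) :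
    μ {x | t < g x} = μ {x | t < f x} := by
  have hgt : MeasurableSet {x | t < g x} := measurableSet_lt measurable_const hg
  have hft : MeasurableSet {x | t < f x} := measurableSet_lt measurable_const hf
  rw [← lintegral_indicator_one hgt, ← lintegral_indicator_one hft,
    lintegral_eq_setLIntegral_pos_add_comp hσ hφ hφσ hφ0 (measurable_one.indicator hgt),
    lintegral_eq_setLIntegral_pos_add_comp hσ hφ hφσ hφ0 (measurable_one.indicator hft)]
  refine setLIntegral_congr_fun (measurableSet_lt measurable_const hφ) fun x hx ↦ ?_
  rcases pair_eq_pair_iff.1 (hfg x hx) with ⟨h₁, h₂⟩ | ⟨h₁, h₂⟩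
  · simp only [indicator, mem_ofPred_eq, h₁, h₂]
  · simp only [indicator, mem_ofPred_eq, Pi.one_apply, h₁, h₂, add_comm]

namespace IsPointwise

variable {Fp Fm : ℝ → ℝ → ℝ} {T : (α → ℝ) → α → ℝ}

theorem equimeasurable_of_pair_eq (hT : IsPointwise σ φ Fp Fm T)
    (hmeas : ∀ f, Measurable f → Measurable (T f)) (hσ : MeasurePreserving σ μ μ)
    (hσσ : Function.Involutive σ) (hφ : Measurable φ) (hφσ : ∀ x, φ (σ x) = -φ x)
    (hφ0 : μ {x | φ x = 0} = 0) (hF : ∀ r s, ({Fp r s, Fm s r} : Set ℝ) = {r, s}) :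
    Equimeasurable μ T := fun f hf ↦
  measure_lt_eq_of_forall_pair_eq hσ hφ hφσ hφ0 hf (hmeas f hf) fun x hx ↦ by
    rw [hT.pair_apply_of_pos hσσ hφσ f hx, hF]

theorem pair_eq_of_equimeasurable (hT : IsPointwise σ φ Fp Fm T)
    (hdiag : ∀ s, Fp s s = Fm s s) (hσ : MeasurePreserving σ μ μ) (hσσ : Function.Involutive σ)
    (hφσ : ∀ x, φ (σ x) = -φ x) {A : Set α} (hA : MeasurableSet A) (hAφ : ∀ x ∈ A, 0 < φ x)
    (h0 : μ A ≠ 0) (htop : μ A ≠ ∞) (hTμ : Equimeasurable μ T) (r s : ℝ) :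
    ({Fp r s, Fm s r} : Set ℝ) = {r, s} := by
  have hμ : μ ≠ 0 := fun h ↦ h0 (by simp [h])
  have hfix : ∀ b, Fp b b = b := fun b ↦ eq_of_forall_measure_lt_const_eq hμ fun t ↦ by
    simpa only [hT.apply_const hdiag] using hTμ (fun _ ↦ b) measurable_const t
  have hdisj : Disjoint A (σ ⁻¹' A) := disjoint_left.2 fun x hx hσx ↦ by
    linarith [hAφ x hx, hAφ _ hσx, hφσ x]
  set c := min (min r s) (min (Fp r s) (Fm s r))
  refine pair_eq_of_forall_measure_lt_twoStep_eq (hσ.measurable hA) hdisj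
    (hσ.measure_preimage hA.nullMeasurableSet) h0 htop (c := c)
    (by simp [c]) (by simp [c]) (by simp [c]) (by simp [c]) fun t ↦ ?_
  rw [← hT.apply_twoStep hdiag hσσ hφσ hAφ r s (hfix c)]
  exact hTμ _ (measurable_twoStep hA (hσ.measurable hA)) t

theorem equimeasurable_iff (hT : IsPointwise σ φ Fp Fm T) (hdiag : ∀ s, Fp s s = Fm s s)
    (hmeas : ∀ f, Measurable f → Measurable (T f)) (hσ : MeasurePreserving σ μ μ)
    (hσσ : Function.Involutive σ) (hφ : Measurable φ) (hφσ : ∀ x, φ (σ x) = -φ x)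
    (hφ0 : μ {x | φ x = 0} = 0) {A : Set α} (hA : MeasurableSet A) (hAφ : ∀ x ∈ A, 0 < φ x)
    (h0 : μ A ≠ 0) (htop : μ A ≠ ∞) :
    Equimeasurable μ T ↔ ∀ r s, ({Fp r s, Fm s r} : Set ℝ) = {r, s} :=
  ⟨hT.pair_eq_of_equimeasurable hdiag hσ hσσ hφσ hA hAφ h0 htop,
    hT.equimeasurable_of_pair_eq hmeas hσ hσσ hφ hφσ hφ0⟩

end IsPointwise

end Pointwise

section Reflection

variable {E : Type*} [NormedAddCommGroup E] [InnerProductSpace ℝ E] {u : E}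

theorem reflection_orthogonal_singleton_apply (hu : ‖u‖ = 1) (x : E) :
    (ℝ ∙ u)ᗮ.reflection x = x - (2 * ⟪x, u⟫) • u := by
  rw [Submodule.reflection_orthogonal_apply, Submodule.reflection_singleton_apply,
    real_inner_comm, hu]
  simp only [RCLike.ofReal_real_eq_id, id, one_pow, div_one]
  module

theorem inner_reflection_orthogonal_singleton (u x : E) :
    ⟪(ℝ ∙ u)ᗮ.reflection x, u⟫ = -⟪x, u⟫ := by
  calc ⟪(ℝ ∙ u)ᗮ.reflection x, u⟫ = ⟪(ℝ ∙ u)ᗮ.reflection x, -(ℝ ∙ u)ᗮ.reflection u⟫ := by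
        rw [Submodule.reflection_orthogonalComplement_singleton_eq_neg, neg_neg]
    _ = -⟪x, u⟫ := by rw [inner_neg_right, LinearIsometryEquiv.inner_map_map]

theorem inner_pos_of_dist_lt_norm {x : E} (h : dist x u < ‖u‖) : 0 < ⟪x, u⟫ := by
  rw [dist_eq_norm] at h
  have hxu : ⟪x, u⟫ = ‖u‖ ^ 2 + ⟪x - u, u⟫ := by
    rw [inner_sub_left, real_inner_self_eq_norm_sq]; ring
  have hcs := neg_le_of_abs_le (abs_real_inner_le_norm (x - u) u)
  nlinarith [norm_nonneg (x - u)]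

theorem measure_setOf_inner_eq_zero [FiniteDimensional ℝ E] [MeasurableSpace E] [BorelSpace E]
    (μ : Measure E) [μ.IsAddHaarMeasure] (hu : u ≠ 0) : μ {x | ⟪x, u⟫ = 0} = 0 := by
  have hset : {x | ⟪x, u⟫ = 0} = ((ℝ ∙ u)ᗮ : Set E) := by
    ext x
    simp [Submodule.mem_orthogonal_singleton_iff_inner_right, real_inner_comm]
  rw [hset]
  refine Measure.addHaar_submodule μ _ fun htop ↦ hu ?_
  have hmem : u ∈ (ℝ ∙ u)ᗮ := htop ▸ Submodule.mem_top
  simpa using Submodule.mem_orthogonal_singleton_iff_inner_right.1 hmem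

end Reflection

theorem stmt_8 {n : ℕ} (u : EuclideanSpace ℝ (Fin n)) (hu : ‖u‖ = 1)
    (T : (EuclideanSpace ℝ (Fin n) → ℝ) → (EuclideanSpace ℝ (Fin n) → ℝ))
    (Fp Fm : ℝ → ℝ → ℝ)
    (hdiag : ∀ s : ℝ, Fp s s = Fm s s)
    (hpt : ∀ f x, T f x =
      if 0 ≤ ⟪x, u⟫ then Fp (f x) (f (x - (2 * ⟪x, u⟫) • u))
      else Fm (f x) (f (x - (2 * ⟪x, u⟫) • u)))
    (hmeas : ∀ f, Measurable f → Measurable (T f)) :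
    (∀ f : EuclideanSpace ℝ (Fin n) → ℝ, Measurable f → ∀ t : ℝ,
        volume {x | t < T f x} = volume {x | t < f x}) ↔
      ∀ r s : ℝ, ({Fp r s, Fm s r} : Set ℝ) = {r, s} := by
  set ρ := (ℝ ∙ u)ᗮ.reflection
  have hu0 : u ≠ 0 := by
    rintro rfl
    simp at hu
  have hT : IsPointwise ρ (⟪·, u⟫) Fp Fm T := fun f x ↦ by
    rw [reflection_orthogonal_singleton_apply hu]
    exact hpt f x
  exact hT.equimeasurable_iff hdiag hmeas ρ.measurePreserving (Submodule.reflection_involutive _)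
    (continuous_id.inner continuous_const).measurable (inner_reflection_orthogonal_singleton u)
    (measure_setOf_inner_eq_zero volume hu0) measurableSet_ball
    (fun x hx ↦ inner_pos_of_dist_lt_norm (hu ▸ Metric.mem_ball.1 hx))
    (Metric.measure_ball_pos volume u one_pos).ne' measure_ball_lt_top.ne
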